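/- arXiv:2112.00618 — 7 statements merged into one kernel-verified Lean document; each statement's English description precedes it below -/
import Mathlib

section
/- For every integer n ≥ 1, the n-th power of the ideal 𝔞 = span{Q, P + y} of the ring O satisfies 𝔞^n = span{Q^n, P + v₁·Q·R·Sₙ + y} (where Q^n, P, v₁, Q, R, Sₙ denote the images in O of the corresponding elements of F[x]). -/
open Polynomial

theorem stmt_0 (F : Type*) [Field F] [Fintype F]
    (g : ℕ) (hg : 1 ≤ g)
    (f h : F[X]) (hf : f.Monic) (hfdeg : f.natDegree = 2 * g + 1)
    (hodd : ringChar F ≠ 2 → h = 0)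
    (heven : ringChar F = 2 → h.Monic ∧ h.natDegree ≤ g)
    (P Q R u₁ v₁ : F[X])
    (hQR : Q * R = f + P * h - P ^ 2)
    (hbez : u₁ * Q + v₁ * (2 * P - h) = 1)
    (S : ℕ → F[X]) (hS1 : S 1 = 0)
    (hSrec : ∀ n : ℕ, 1 ≤ n →
      S (n + 1) = 1 + (1 + v₁ * h - 2 * P * v₁) * S n - v₁ ^ 2 * Q * R * (S n) ^ 2) :
    ∀ n : ℕ, 1 ≤ n →
      (Ideal.span {AdjoinRoot.of (X ^ 2 + C h * X - C f) Q,
          AdjoinRoot.of (X ^ 2 + C h * X - C f) P +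
            AdjoinRoot.root (X ^ 2 + C h * X - C f)}) ^ n
        = Ideal.span {AdjoinRoot.of (X ^ 2 + C h * X - C f) (Q ^ n),
            AdjoinRoot.of (X ^ 2 + C h * X - C f) (P + v₁ * Q * R * S n) +
              AdjoinRoot.root (X ^ 2 + C h * X - C f)} := by
  set pol : (F[X])[X] := X ^ 2 + C h * X - C f with hpoldef
  set φ := AdjoinRoot.of pol with hφdef
  set y := AdjoinRoot.root pol with hydef
  -- the defining relation of the quotient ring
  have key : y ^ 2 + φ h * y = φ f := by
    have h0 := AdjoinRoot.eval₂_root pol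
    rw [hpoldef] at h0
    simp only [eval₂_add, eval₂_sub, eval₂_mul, eval₂_pow, eval₂_X, eval₂_C] at h0
    rw [← hφdef, ← hydef] at h0
    linear_combination h0
  -- divisibility of successive differences of S
  have hdvd : ∀ m : ℕ, Q ^ m ∣ S (m + 2) - S (m + 1) := by
    intro m
    induction m with
    | zero => simpa using one_dvd _
    | succ m ih =>
      obtain ⟨E, hE⟩ := ih
      refine ⟨E * (u₁ - v₁ ^ 2 * R * (S (m + 2) + S (m + 1))), ?_⟩
      have hid : S (m + 3) - S (m + 2)
          = Q * (S (m + 2) - S (m + 1)) * (u₁ - v₁ ^ 2 * R * (S (m + 2) + S (m + 1))) := by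
        linear_combination hSrec (m + 2) (by omega) - hSrec (m + 1) (by omega)
          - (S (m + 2) - S (m + 1)) * hbez
      rw [hid, hE]; ring
  intro n hn
  induction n, hn using Nat.le_induction with
  | base => rw [pow_one, hS1, mul_zero, add_zero, pow_one]
  | succ n hn IH =>
    rw [pow_succ, IH, Ideal.span_pair_mul_span_pair]
    obtain ⟨E, hE⟩ : Q ^ (n - 1) ∣ S (n + 1) - S n := by
      have h1 := hdvd (n - 1)
      rwa [show n - 1 + 2 = n + 1 by omega, show n - 1 + 1 = n by omega] at h1
    -- transport the hypotheses into the quotient ring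
    have hQR' : φ Q * φ R = φ f + φ P * φ h - φ P ^ 2 := by
      have := congrArg φ hQR
      simpa only [map_mul, map_add, map_sub, map_pow] using this
    have hbez' : φ u₁ * φ Q + φ v₁ * (2 * φ P - φ h) = 1 := by
      have := congrArg φ hbez
      simpa only [map_mul, map_add, map_sub, map_one, map_ofNat] using this
    have hSrec' : φ (S (n + 1))
        = 1 + (1 + φ v₁ * φ h - 2 * φ P * φ v₁) * φ (S n)
          - φ v₁ ^ 2 * φ Q * φ R * φ (S n) ^ 2 := by
      have := congrArg φ (hSrec n hn)
      simpa only [map_mul, map_add, map_sub, map_one, map_pow, map_ofNat] using this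
    have hE' : φ (S (n + 1)) - φ (S n) = φ Q ^ (n - 1) * φ E := by
      have := congrArg φ hE
      simpa only [map_mul, map_sub, map_pow] using this
    have hQpow : φ Q ^ (n + 1) = φ Q ^ (n - 1) * φ Q ^ 2 := by
      rw [← pow_add]; congr 1; omega
    -- membership facts for the right-hand side ideal J
    set J : Ideal (AdjoinRoot pol) :=
      Ideal.span {φ (Q ^ (n + 1)), φ (P + v₁ * Q * R * S (n + 1)) + y} with hJdef
    have hQmem : φ (Q ^ (n + 1)) ∈ J :=
      Ideal.subset_span (by simp)
    have hPmem : φ (P + v₁ * Q * R * S (n + 1)) + y ∈ J :=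
      Ideal.subset_span (by simp)
    -- the four product generators
    have e1 : φ (Q ^ n) * φ Q = φ (Q ^ (n + 1)) := by
      rw [← map_mul, ← pow_succ]
    have e2 : φ (Q ^ n) * (φ P + y)
        = φ (Q ^ n) * (φ (P + v₁ * Q * R * S (n + 1)) + y)
          - (φ v₁ * φ R * φ (S (n + 1))) * φ (Q ^ (n + 1)) := by
      simp only [map_mul, map_add, map_pow]
      ring
    have e3 : (φ (P + v₁ * Q * R * S n) + y) * φ Q
        = φ Q * (φ (P + v₁ * Q * R * S (n + 1)) + y)
          - (φ v₁ * φ R * φ E) * φ (Q ^ (n + 1)) := by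
      simp only [map_mul, map_add, map_pow]
      linear_combination φ v₁ * φ R * φ E * hQpow - (φ v₁ * φ Q ^ 2 * φ R) * hE'
    have hG3 : (φ (P + v₁ * Q * R * S n) + y) * φ Q ∈ J := by
      rw [e3]
      exact sub_mem (Ideal.mul_mem_left _ _ hPmem) (Ideal.mul_mem_left _ _ hQmem)
    have e4 : (φ (P + v₁ * Q * R * S n) + y) * (φ P + y)
        = (φ (P + v₁ * Q * R * S n) + y) * (φ (P + v₁ * Q * R * S (n + 1)) + y)
          - (φ v₁ * φ R * φ (S (n + 1))) * ((φ (P + v₁ * Q * R * S n) + y) * φ Q) := by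
      simp only [map_mul, map_add]
      ring
    -- the key identity expressing the new generator
    have hA : φ (P + v₁ * Q * R * S (n + 1)) + y
        = φ v₁ * ((φ (P + v₁ * Q * R * S n) + y) * (φ P + y))
          + φ (u₁ - v₁ ^ 2 * R * S n) * ((φ (P + v₁ * Q * R * S n) + y) * φ Q) := by
      simp only [map_mul, map_add, map_sub, map_pow]
      linear_combination (-(φ v₁)) * key + φ v₁ * hQR'
        - (φ P + y + φ v₁ * φ Q * φ R * φ (S n)) * hbez'
        + (φ v₁ * φ Q * φ R) * hSrec'
    apply le_antisymm
    · rw [Ideal.span_le]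
      rintro x hx
      simp only [Set.mem_insert_iff, Set.mem_singleton_iff] at hx
      rcases hx with rfl | rfl | rfl | rfl
      · rw [e1]; exact hQmem
      · rw [e2]
        exact sub_mem (Ideal.mul_mem_left _ _ hPmem) (Ideal.mul_mem_left _ _ hQmem)
      · exact hG3
      · rw [e4]
        exact sub_mem (Ideal.mul_mem_left _ _ hPmem) (Ideal.mul_mem_left _ _ hG3)
    · rw [Ideal.span_le]
      rintro x hx
      simp only [Set.mem_insert_iff, Set.mem_singleton_iff] at hx
      rcases hx with rfl | rfl
      · rw [← e1]
        exact Ideal.subset_span (by simp)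
      · rw [hA]
        refine add_mem (Ideal.mul_mem_left _ _ ?_) (Ideal.mul_mem_left _ _ ?_)
        · exact Ideal.subset_span (by simp)
        · exact Ideal.subset_span (by simp)
end

section
/- One has S₃ = 2 + v₁·(h − 2P − v₁·Q·R), and consequently the cube of the ideal 𝔞 = span{Q, P + y} of O satisfies 𝔞³ = span{Q³, P + v₁·Q·R·(2 + v₁·(h − 2P − v₁·Q·R)) + y}. -/
open Polynomial Pointwise

theorem stmt_1 (F : Type*) [Field F] [Fintype F]
    (g : ℕ) (hg : 1 ≤ g)
    (f h : F[X]) (hf : f.Monic) (hfdeg : f.natDegree = 2 * g + 1)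
    (hodd : ringChar F ≠ 2 → h = 0)
    (heven : ringChar F = 2 → h.Monic ∧ h.natDegree ≤ g)
    (P Q R u₁ v₁ : F[X])
    (hQR : Q * R = f + P * h - P ^ 2)
    (hbez : u₁ * Q + v₁ * (2 * P - h) = 1)
    (S : ℕ → F[X]) (hS1 : S 1 = 0)
    (hSrec : ∀ n : ℕ, 1 ≤ n →
      S (n + 1) = 1 + (1 + v₁ * h - 2 * P * v₁) * S n - v₁ ^ 2 * Q * R * (S n) ^ 2) :
    S 3 = 2 + v₁ * (h - 2 * P - v₁ * Q * R) ∧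
      (Ideal.span {AdjoinRoot.of (X ^ 2 + C h * X - C f) Q,
          AdjoinRoot.of (X ^ 2 + C h * X - C f) P +
            AdjoinRoot.root (X ^ 2 + C h * X - C f)}) ^ 3
        = Ideal.span {AdjoinRoot.of (X ^ 2 + C h * X - C f) (Q ^ 3),
            AdjoinRoot.of (X ^ 2 + C h * X - C f)
                (P + v₁ * Q * R * (2 + v₁ * (h - 2 * P - v₁ * Q * R))) +
              AdjoinRoot.root (X ^ 2 + C h * X - C f)} := by
  have hS2 : S 2 = 1 := by
    have h2 := hSrec 1 le_rfl
    rw [hS1] at h2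
    simpa using h2
  have hS3 : S 3 = 2 + v₁ * (h - 2 * P - v₁ * Q * R) := by
    have h3 := hSrec 2 one_le_two
    rw [hS2] at h3
    norm_num at h3
    rw [h3]; ring
  refine ⟨hS3, ?_⟩
  set K : F[X][X] := X ^ 2 + C h * X - C f with hK
  -- basic relations in the quotient ring
  have h0 : AdjoinRoot.mk K (X ^ 2 + C h * X - C f) = 0 := by
    rw [← hK]; exact AdjoinRoot.mk_self
  have rel1 : (AdjoinRoot.root K) ^ 2 + (AdjoinRoot.of K h) * AdjoinRoot.root K
      - AdjoinRoot.of K f = 0 := by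
    simpa only [map_add, map_sub, map_mul, map_pow, AdjoinRoot.mk_X, AdjoinRoot.mk_C] using h0
  have hQR' : AdjoinRoot.of K Q * AdjoinRoot.of K R
      = AdjoinRoot.of K f + AdjoinRoot.of K P * AdjoinRoot.of K h - AdjoinRoot.of K P ^ 2 := by
    simpa only [map_mul, map_add, map_sub, map_pow] using congrArg (AdjoinRoot.of K) hQR
  have hbez0 : AdjoinRoot.of K u₁ * AdjoinRoot.of K Q
      + AdjoinRoot.of K v₁ * (2 * AdjoinRoot.of K P - AdjoinRoot.of K h) = 1 := by
    simpa only [map_add, map_mul, map_sub, map_one, map_ofNat]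
      using congrArg (AdjoinRoot.of K) hbez
  have hg1 : AdjoinRoot.of K (Q ^ 3) = AdjoinRoot.of K Q ^ 3 := map_pow _ _ _
  have hg2 : AdjoinRoot.of K (P + v₁ * Q * R * (2 + v₁ * (h - 2 * P - v₁ * Q * R)))
      = AdjoinRoot.of K P + AdjoinRoot.of K v₁ * AdjoinRoot.of K Q * AdjoinRoot.of K R *
          (2 + AdjoinRoot.of K v₁ * (AdjoinRoot.of K h - 2 * AdjoinRoot.of K P
            - AdjoinRoot.of K v₁ * AdjoinRoot.of K Q * AdjoinRoot.of K R)) := by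
    simp only [map_add, map_mul, map_sub, map_ofNat]
  set p := AdjoinRoot.of K P with hp
  set q := AdjoinRoot.of K Q with hq
  set r := AdjoinRoot.of K R with hr
  set m := AdjoinRoot.of K h with hm
  set U := AdjoinRoot.of K u₁ with hU
  set V := AdjoinRoot.of K v₁ with hV
  set y := AdjoinRoot.root K with hy
  have hb2 : (p + y) ^ 2 = q * r + (2 * p - m) * (p + y) := by
    linear_combination rel1 - hQR'
  rw [hg1, hg2]
  have ha : q ∈ Ideal.span {q, p + y} := Ideal.subset_span (Set.mem_insert _ _)
  have hb : p + y ∈ Ideal.span {q, p + y} :=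
    Ideal.subset_span (Set.mem_insert_of_mem _ rfl)
  refine le_antisymm ?_ ?_
  · have hsss : (Ideal.span {q, p + y}) ^ 3
        = Ideal.span (({q, p + y} : Set (AdjoinRoot K)) * ({q, p + y} : Set (AdjoinRoot K))
          * ({q, p + y} : Set (AdjoinRoot K))) := by
      rw [pow_succ, pow_two, Ideal.span_mul_span', Ideal.span_mul_span']
    rw [hsss, Ideal.span_le]
    rintro x hx
    rw [Set.mem_mul] at hx
    obtain ⟨y1, hy1, z1, hz1, rfl⟩ := hx
    rw [Set.mem_mul] at hy1
    obtain ⟨x1, hx1, x2, hx2, rfl⟩ := hy1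
    simp only [Set.mem_insert_iff, Set.mem_singleton_iff] at hx1 hx2 hz1
    rcases hx1 with rfl | rfl <;> rcases hx2 with rfl | rfl <;> rcases hz1 with rfl | rfl
    · exact Ideal.mem_span_pair.mpr ⟨1, 0, by ring⟩
    · exact Ideal.mem_span_pair.mpr
        ⟨-(V * r * (2 + V * (m - 2 * p - V * q * r))), q ^ 2, by ring⟩
    · exact Ideal.mem_span_pair.mpr
        ⟨-(V * r * (2 + V * (m - 2 * p - V * q * r))), q ^ 2, by ring⟩
    · exact Ideal.mem_span_pair.mpr
        ⟨U ^ 2 * q * r + V ^ 2 * r ^ 2 - U * V ^ 2 * q * r ^ 2, q * (2 * p - m), by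
          linear_combination (-q) * hb2 + (U * q ^ 3 * r - V ^ 2 * q ^ 3 * r ^ 2
            - 2 * V * p * q ^ 2 * r + V * q ^ 2 * r * m + q ^ 2 * r) * hbez0⟩
    · exact Ideal.mem_span_pair.mpr
        ⟨-(V * r * (2 + V * (m - 2 * p - V * q * r))), q ^ 2, by ring⟩
    · exact Ideal.mem_span_pair.mpr
        ⟨U ^ 2 * q * r + V ^ 2 * r ^ 2 - U * V ^ 2 * q * r ^ 2, q * (2 * p - m), by
          linear_combination (-q) * hb2 + (U * q ^ 3 * r - V ^ 2 * q ^ 3 * r ^ 2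
            - 2 * V * p * q ^ 2 * r + V * q ^ 2 * r * m + q ^ 2 * r) * hbez0⟩
    · exact Ideal.mem_span_pair.mpr
        ⟨U ^ 2 * q * r + V ^ 2 * r ^ 2 - U * V ^ 2 * q * r ^ 2, q * (2 * p - m), by
          linear_combination (-q) * hb2 + (U * q ^ 3 * r - V ^ 2 * q ^ 3 * r ^ 2
            - 2 * V * p * q ^ 2 * r + V * q ^ 2 * r * m + q ^ 2 * r) * hbez0⟩
    · exact Ideal.mem_span_pair.mpr
        ⟨r * (U ^ 2 * (2 * p - m) - 3 * U * V * r + U ^ 2 * V * q * r + V ^ 3 * r ^ 2),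
          q * r + (2 * p - m) ^ 2, by
          linear_combination (-(p + y) - 2 * p + m) * hb2
            + (U * V * q ^ 3 * r ^ 2 + 2 * U * p * q ^ 2 * r - U * q ^ 2 * r * m
              - 2 * V ^ 2 * p * q ^ 2 * r ^ 2 + V ^ 2 * q ^ 2 * r ^ 2 * m
              - 4 * V * p ^ 2 * q * r + 4 * V * p * q * r * m - 2 * V * q ^ 2 * r ^ 2
              - V * q * r * m ^ 2 + 2 * p * q * r - q * r * m) * hbez0⟩
  · rw [Ideal.span_le]
    rintro x hx
    simp only [Set.mem_insert_iff, Set.mem_singleton_iff] at hx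
    rcases hx with rfl | rfl
    · exact Ideal.pow_mem_pow ha 3
    · have h3' : (Ideal.span {q, p + y}) ^ 3
          = Ideal.span {q, p + y} * Ideal.span {q, p + y} * Ideal.span {q, p + y} := by
        rw [pow_succ, pow_two]
      rw [SetLike.mem_coe, h3']
      have heq : p + V * q * r * (2 + V * (m - 2 * p - V * q * r)) + y
          = U ^ 2 * (q * q * (p + y))
            + (3 * U * V - U ^ 2 * V * q) * (q * (p + y) * (p + y))
            + (2 * V ^ 3 * (2 * p - m) - V ^ 3 * (p + y)) * ((p + y) * (p + y) * (p + y)) := by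
        linear_combination
          ((p + y) ^ 2 * V ^ 3 - 2 * (p + y) * V ^ 3 * p + (p + y) * V ^ 3 * m
            + U ^ 2 * V * q ^ 2 - 3 * U * V * q - 4 * V ^ 3 * p ^ 2 + 4 * V ^ 3 * p * m
            + V ^ 3 * q * r - V ^ 3 * m ^ 2) * hb2
          + (2 * (p + y) * U * V * p * q - (p + y) * U * V * q * m - (p + y) * U * q
            - 4 * (p + y) * V ^ 2 * p ^ 2 + 4 * (p + y) * V ^ 2 * p * m
            - (p + y) * V ^ 2 * m ^ 2 - 2 * (p + y) * V * p + (p + y) * V * m - (p + y)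
            + U * V * q ^ 2 * r - 2 * V ^ 2 * p * q * r + V ^ 2 * q * r * m
            - 2 * V * q * r) * hbez0
      rw [heq]
      exact add_mem (add_mem
        (Ideal.mul_mem_left _ _ (Ideal.mul_mem_mul (Ideal.mul_mem_mul ha ha) hb))
        (Ideal.mul_mem_left _ _ (Ideal.mul_mem_mul (Ideal.mul_mem_mul ha hb) hb)))
        (Ideal.mul_mem_left _ _ (Ideal.mul_mem_mul (Ideal.mul_mem_mul hb hb) hb))
end

section
/- One has S₂ = 1, and consequently the square of the ideal 𝔞 = span{Q, P + y} of O satisfies 𝔞² = span{Q², P + v₁·Q·R + y}. -/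
open Polynomial

theorem stmt_2 (F : Type*) [Field F] [Fintype F]
    (g : ℕ) (hg : 1 ≤ g)
    (f h : F[X]) (hf : f.Monic) (hfdeg : f.natDegree = 2 * g + 1)
    (hodd : ringChar F ≠ 2 → h = 0)
    (heven : ringChar F = 2 → h.Monic ∧ h.natDegree ≤ g)
    (P Q R u₁ v₁ : F[X])
    (hQR : Q * R = f + P * h - P ^ 2)
    (hbez : u₁ * Q + v₁ * (2 * P - h) = 1)
    (S : ℕ → F[X]) (hS1 : S 1 = 0)
    (hSrec : ∀ n : ℕ, 1 ≤ n →
      S (n + 1) = 1 + (1 + v₁ * h - 2 * P * v₁) * S n - v₁ ^ 2 * Q * R * (S n) ^ 2) :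
    S 2 = 1 ∧
      (Ideal.span {AdjoinRoot.of (X ^ 2 + C h * X - C f) Q,
          AdjoinRoot.of (X ^ 2 + C h * X - C f) P +
            AdjoinRoot.root (X ^ 2 + C h * X - C f)}) ^ 2
        = Ideal.span {AdjoinRoot.of (X ^ 2 + C h * X - C f) (Q ^ 2),
            AdjoinRoot.of (X ^ 2 + C h * X - C f) (P + v₁ * Q * R) +
              AdjoinRoot.root (X ^ 2 + C h * X - C f)} := by
  constructor
  · have := hSrec 1 le_rfl
    simp [hS1] at this
    simpa using this
  · set W : (F[X])[X] := X ^ 2 + C h * X - C f with hW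
    let φ : F[X] →+* AdjoinRoot W := AdjoinRoot.of W
    let t : AdjoinRoot W := AdjoinRoot.root W
    show Ideal.span {φ Q, φ P + t} ^ 2
        = Ideal.span {φ (Q ^ 2), φ (P + v₁ * Q * R) + t}
    have rel : t ^ 2 + φ h * t - φ f = 0 := by
      have := AdjoinRoot.eval₂_root W
      simpa [hW, eval₂_sub, eval₂_add, eval₂_mul, eval₂_pow, eval₂_X, eval₂_C] using this
    have hQR' : φ Q * φ R = φ f + φ P * φ h - φ P ^ 2 := by
      have := congrArg φ hQR
      push_cast [map_mul, map_add, map_sub, map_pow] at this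
      exact this
    have hbez' : φ u₁ * φ Q + φ v₁ * (2 * φ P - φ h) = 1 := by
      have := congrArg φ hbez
      push_cast [map_mul, map_add, map_sub, map_one, map_ofNat] at this
      simpa [two_mul] using this
    have hq2 : φ (Q ^ 2) = φ Q * φ Q := by rw [← map_mul, pow_two]
    have hbval : φ (P + v₁ * Q * R) + t = φ P + φ v₁ * φ Q * φ R + t := by
      rw [map_add, map_mul, map_mul]
    apply le_antisymm
    · rw [pow_two, Ideal.mul_le]
      intro x hx z hz
      rw [Ideal.mem_span_pair] at hx hz
      obtain ⟨c1, c2, rfl⟩ := hx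
      obtain ⟨d1, d2, rfl⟩ := hz
      have m1 : φ Q * φ Q ∈ Ideal.span {φ (Q ^ 2), φ (P + v₁ * Q * R) + t} := by
        rw [← hq2]
        exact Ideal.subset_span (Set.mem_insert _ _)
      have m2 : φ Q * (φ P + t) ∈ Ideal.span {φ (Q ^ 2), φ (P + v₁ * Q * R) + t} := by
        rw [Ideal.mem_span_pair]
        refine ⟨-(φ v₁ * φ R), φ Q, ?_⟩
        rw [hq2, hbval]
        ring
      have m3 : (φ P + t) * (φ P + t)
          ∈ Ideal.span {φ (Q ^ 2), φ (P + v₁ * Q * R) + t} := by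
        rw [Ideal.mem_span_pair]
        refine ⟨φ u₁ * φ R, 2 * φ P - φ h, ?_⟩
        rw [hq2, hbval]
        linear_combination -rel + hQR' + φ Q * φ R * hbez'
      have hexp : (c1 * φ Q + c2 * (φ P + t)) * (d1 * φ Q + d2 * (φ P + t))
          = (c1 * d1) * (φ Q * φ Q) + (c1 * d2 + c2 * d1) * (φ Q * (φ P + t))
            + (c2 * d2) * ((φ P + t) * (φ P + t)) := by
        ring
      rw [hexp]
      exact add_mem (add_mem (Ideal.mul_mem_left _ _ m1) (Ideal.mul_mem_left _ _ m2))
        (Ideal.mul_mem_left _ _ m3)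
    · rw [Ideal.span_le]
      have hqmem : φ Q ∈ Ideal.span {φ Q, φ P + t} :=
        Ideal.subset_span (Set.mem_insert _ _)
      have hamem : φ P + t ∈ Ideal.span {φ Q, φ P + t} :=
        Ideal.subset_span (Set.mem_insert_of_mem _ rfl)
      rintro x (rfl | rfl)
      · rw [hq2, pow_two]
        exact Ideal.mul_mem_mul hqmem hqmem
      · have key : φ (P + v₁ * Q * R) + t
            = φ u₁ * (φ Q * (φ P + t)) + φ v₁ * ((φ P + t) * (φ P + t)) := by
          rw [hbval]
          linear_combination (-(φ v₁)) * rel + φ v₁ * hQR' - (φ P + t) * hbez'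
        rw [SetLike.mem_coe, key, pow_two]
        exact add_mem
          (Ideal.mul_mem_left _ _ (Ideal.mul_mem_mul hqmem hamem))
          (Ideal.mul_mem_left _ _ (Ideal.mul_mem_mul hamem hamem))
end

section
/- For every integer n ≥ 1, setting Pₙ = P + v₁·Q·R·Sₙ, the polynomial Q^n divides f + Pₙ·h − Pₙ² in F[x]. -/
open Polynomial

theorem stmt_5 (F : Type*) [Field F] [Fintype F]
    (g : ℕ) (hg : 1 ≤ g)
    (f h : F[X]) (hf : f.Monic) (hfdeg : f.natDegree = 2 * g + 1)
    (hodd : ringChar F ≠ 2 → h = 0)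
    (heven : ringChar F = 2 → h.Monic ∧ h.natDegree ≤ g)
    (P Q R u₁ v₁ : F[X])
    (hQR : Q * R = f + P * h - P ^ 2)
    (hbez : u₁ * Q + v₁ * (2 * P - h) = 1)
    (S : ℕ → F[X]) (hS1 : S 1 = 0)
    (hSrec : ∀ n : ℕ, 1 ≤ n →
      S (n + 1) = 1 + (1 + v₁ * h - 2 * P * v₁) * S n - v₁ ^ 2 * Q * R * (S n) ^ 2) :
    ∀ n : ℕ, 1 ≤ n →
      Q ^ n ∣ f + (P + v₁ * Q * R * S n) * h - (P + v₁ * Q * R * S n) ^ 2 := by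
  set T : ℕ → F[X] := fun n => 1 - v₁ * (2 * P - h) * S n - v₁ ^ 2 * Q * R * (S n) ^ 2 with hT
  have key : ∀ n : ℕ, 1 ≤ n → Q ^ (n - 1) ∣ T n := by
    intro n hn
    induction n with
    | zero => omega
    | succ m ih =>
      rcases Nat.eq_or_lt_of_le hn with h1 | h1
      · simp [hT, ← h1, hS1]
      · have hm : 1 ≤ m := by omega
        obtain ⟨c, hc⟩ := ih hm
        refine ⟨c * (u₁ - v₁ ^ 2 * R * (2 * S m + T m)), ?_⟩
        have hrec := hSrec m hm
        have hident : T (m + 1) = Q * (T m * (u₁ - v₁ ^ 2 * R * (2 * S m + T m))) := by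
          simp only [hT, hrec]
          linear_combination (-(1 - v₁ * (2 * P - h) * S m - v₁ ^ 2 * Q * R * (S m) ^ 2)) * hbez
        rw [hident, hc]
        have : m + 1 - 1 = (m - 1) + 1 := by omega
        rw [this]
        ring
  intro n hn
  obtain ⟨c, hc⟩ := key n hn
  obtain ⟨m, rfl⟩ : ∃ m, n = m + 1 := ⟨n - 1, by omega⟩
  refine ⟨R * c, ?_⟩
  have hc' : T (m + 1) = Q ^ m * c := by simpa using hc
  have hTdef : T (m + 1) = 1 - v₁ * (2 * P - h) * S (m + 1) - v₁ ^ 2 * Q * R * (S (m + 1)) ^ 2 := rfl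
  have hc2 : 1 - v₁ * (2 * P - h) * S (m + 1) - v₁ ^ 2 * Q * R * (S (m + 1)) ^ 2 = Q ^ m * c :=
    hTdef ▸ hc'
  linear_combination (-1 : F[X]) * hQR + Q * R * hc2
end

section
/- For every integer n ≥ 1, the n-th power of the ideal 𝔞 = span{Q, τ} of the ring O satisfies 𝔞^n = span{Q^n, τ − Q·Sₙ} (where Q^n, Q, Sₙ denote the images in O of the corresponding integers). -/
/-!
Write `f s = Q s² - P s + c`, so that `Q f(s)` is the norm of `τ - Q s`. Using `u Q + v P = 1`, the
recursion reads `S (n+1) = S n + v f(S n)`, a Newton step for the root of `f`, and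
`f(S (n+1)) = Q f(S n) (u + 2 v S n + v² f(S n))`; hence `Q ^ (n-1) ∣ f(S n)`.
For the inclusion `⊇` in `𝔞 ^ (n+1) = 𝔞 ^ n 𝔞`, the relation `τ² = P τ - Q c` gives
`(τ - Q S n) (v τ + (u + v S n) Q) = τ - Q S (n+1)`. For `⊆`, the divisibility says that
`τ - Q S n ≡ τ - Q S (n+1) (mod Q ^ n)`, so the generator `τ - Q S n` of `𝔞 ^ n` may be replaced
by `τ - Q S (n+1)`.
-/

open Polynomial Ideal

section SpanPairPow

variable {A : Type*} [CommRing A] {τ P Q c u v : A}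

theorem newton_step_eq (hbez : u * Q + v * P = 1) (s : A) :
    c * v + Q * u * s + Q * v * s ^ 2 = s + v * (Q * s ^ 2 - P * s + c) := by
  linear_combination s * hbez

theorem mul_dvd_newton_step (hbez : u * Q + v * P = 1) (s : A) :
    Q * (Q * s ^ 2 - P * s + c) ∣
      Q * (c * v + Q * u * s + Q * v * s ^ 2) ^ 2 - P * (c * v + Q * u * s + Q * v * s ^ 2) + c :=
  ⟨u + 2 * v * s + v ^ 2 * (Q * s ^ 2 - P * s + c), by
    rw [newton_step_eq hbez]
    linear_combination (-(Q * s ^ 2 - P * s + c)) * hbez⟩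

theorem pow_dvd_of_newton_rec (hbez : u * Q + v * P = 1) {s : ℕ → A}
    (hrec : ∀ n, 1 ≤ n → s (n + 1) = c * v + Q * u * s n + Q * v * s n ^ 2) (m : ℕ) :
    Q ^ m ∣ Q * s (m + 1) ^ 2 - P * s (m + 1) + c := by
  induction m with
  | zero => simp
  | succ m ih =>
    rw [hrec (m + 1) (by omega), pow_succ']
    exact (mul_dvd_mul_left Q ih).trans (mul_dvd_newton_step hbez _)

theorem span_pair_pow_mul_span_pair (hτ : τ ^ 2 = P * τ - Q * c) (hbez : u * Q + v * P = 1)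
    {m : ℕ} {s : A} (hdvd : Q ^ m ∣ Q * s ^ 2 - P * s + c) :
    span {Q ^ (m + 1), τ - Q * s} * span {Q, τ} =
      span {Q ^ (m + 2), τ - Q * (c * v + Q * u * s + Q * v * s ^ 2)} := by
  set s' := c * v + Q * u * s + Q * v * s ^ 2 with hs'
  obtain ⟨k, hk⟩ := hdvd
  have hshift : τ - Q * s = (τ - Q * s') + (v * k) * Q ^ (m + 1) := by
    rw [hs', newton_step_eq hbez, hk]
    ring
  apply le_antisymm
  · rw [hshift, span_pair_add_mul_left, span_pair_mul_span_pair, span_le]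
    rintro _ (rfl | rfl | rfl | rfl)
    · exact subset_span (by rw [← pow_succ]; exact Set.mem_insert _ _)
    · exact mem_span_pair.2 ⟨s', Q ^ (m + 1), by ring⟩
    · exact mul_mem_right _ _ (subset_span (Set.mem_insert_of_mem _ rfl))
    · exact mul_mem_right _ _ (subset_span (Set.mem_insert_of_mem _ rfl))
  · rw [span_le]
    rintro _ (rfl | rfl)
    · rw [SetLike.mem_coe, pow_succ _ (m + 1)]
      exact mul_mem_mul (subset_span (Set.mem_insert _ _)) (subset_span (Set.mem_insert _ _))
    · have hfactor : τ - Q * s' = (τ - Q * s) * ((u + v * s) * Q + v * τ) := by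
        rw [hs']
        linear_combination (-v) * hτ + (-τ) * hbez
      rw [hfactor]
      exact mul_mem_mul (subset_span (Set.mem_insert_of_mem _ rfl))
        (mem_span_pair.2 ⟨u + v * s, v, rfl⟩)

theorem span_pair_pow_eq_of_newton_rec (hτ : τ ^ 2 = P * τ - Q * c)
    (hbez : u * Q + v * P = 1) {s : ℕ → A} (hs1 : s 1 = 0)
    (hrec : ∀ n, 1 ≤ n → s (n + 1) = c * v + Q * u * s n + Q * v * s n ^ 2) :
    ∀ n, 1 ≤ n → span {Q, τ} ^ n = span {Q ^ n, τ - Q * s n} := by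
  intro n hn
  induction n, hn using Nat.le_induction with
  | base => simp [hs1]
  | succ n hn ih =>
    obtain ⟨m, rfl⟩ : ∃ m, n = m + 1 := ⟨n - 1, by omega⟩
    rw [pow_succ, ih, hrec _ hn,
      span_pair_pow_mul_span_pair hτ hbez (pow_dvd_of_newton_rec hbez hrec m)]

end SpanPairPow

theorem AdjoinRoot.root_sq_of_quadratic {R : Type*} [CommRing R] (p q : R) :
    root (X ^ 2 - C p * X + C q) ^ 2 =
      of (X ^ 2 - C p * X + C q) p * root (X ^ 2 - C p * X + C q) -
        of (X ^ 2 - C p * X + C q) q := by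
  have h := mk_self (f := X ^ 2 - C p * X + C q)
  simp only [map_add, map_sub, map_mul, map_pow, mk_X, mk_C] at h
  linear_combination h

theorem stmt_6_general (P Q c u₁ v₁ : ℤ)
    (hbez : u₁ * Q + v₁ * P = 1)
    (S : ℕ → ℤ) (hS1 : S 1 = 0)
    (hSrec : ∀ n : ℕ, 1 ≤ n → S (n + 1) = c * v₁ + Q * u₁ * S n + Q * v₁ * (S n) ^ 2) :
    ∀ n : ℕ, 1 ≤ n →
      (Ideal.span {(Q : AdjoinRoot (X ^ 2 - C P * X + C (Q * c) : ℤ[X])),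
          AdjoinRoot.root (X ^ 2 - C P * X + C (Q * c) : ℤ[X])}) ^ n
        = Ideal.span {((Q ^ n : ℤ) : AdjoinRoot (X ^ 2 - C P * X + C (Q * c) : ℤ[X])),
            AdjoinRoot.root (X ^ 2 - C P * X + C (Q * c) : ℤ[X]) -
              ((Q * S n : ℤ) : AdjoinRoot (X ^ 2 - C P * X + C (Q * c) : ℤ[X]))} := by
  have hτ := AdjoinRoot.root_sq_of_quadratic P (Q * c)
  simp only [eq_intCast, Int.cast_mul] at hτ
  have hbezO := congrArg (Int.cast : ℤ → AdjoinRoot (X ^ 2 - C P * X + C (Q * c))) hbez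
  push_cast at hbezO
  intro n hn
  push_cast
  exact span_pair_pow_eq_of_newton_rec hτ hbezO (s := fun n ↦ (S n : _)) (by simp [hS1])
    (fun n hn ↦ by push_cast [hSrec n hn]; ring) n hn

theorem stmt_6 (Δ : ℤ) (hΔ : Δ < 0) (P Q c u₁ v₁ : ℤ)
    (hdisc : P ^ 2 - Δ = 4 * Q * c) (hbez : u₁ * Q + v₁ * P = 1)
    (S : ℕ → ℤ) (hS1 : S 1 = 0)
    (hSrec : ∀ n : ℕ, 1 ≤ n → S (n + 1) = c * v₁ + Q * u₁ * S n + Q * v₁ * (S n) ^ 2) :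
    ∀ n : ℕ, 1 ≤ n →
      (Ideal.span {(Q : AdjoinRoot (X ^ 2 - C P * X + C (Q * c) : ℤ[X])),
          AdjoinRoot.root (X ^ 2 - C P * X + C (Q * c) : ℤ[X])}) ^ n
        = Ideal.span {((Q ^ n : ℤ) : AdjoinRoot (X ^ 2 - C P * X + C (Q * c) : ℤ[X])),
            AdjoinRoot.root (X ^ 2 - C P * X + C (Q * c) : ℤ[X]) -
              ((Q * S n : ℤ) : AdjoinRoot (X ^ 2 - C P * X + C (Q * c) : ℤ[X]))} :=
  stmt_6_general P Q c u₁ v₁ hbez S hS1 hSrec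
end

section
/- For every integer n ≥ 1, the integer 4·Q^n divides (P − 2·Q·Sₙ)² − Δ. -/
theorem stmt_7 (Δ : ℤ) (hΔ : Δ < 0) (P Q c u₁ v₁ : ℤ)
    (hdisc : P ^ 2 - Δ = 4 * Q * c) (hbez : u₁ * Q + v₁ * P = 1)
    (S : ℕ → ℤ) (hS1 : S 1 = 0)
    (hSrec : ∀ n : ℕ, 1 ≤ n → S (n + 1) = c * v₁ + Q * u₁ * S n + Q * v₁ * (S n) ^ 2) :
    ∀ n : ℕ, 1 ≤ n → 4 * Q ^ n ∣ (P - 2 * Q * S n) ^ 2 - Δ := by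
  have key : ∀ n : ℕ, 1 ≤ n → Q ^ (n - 1) ∣ c - P * S n + Q * (S n) ^ 2 := by
    intro n hn
    induction n, hn using Nat.le_induction with
    | base => simp [hS1]
    | succ n hn ih =>
      obtain ⟨k, hk⟩ := ih
      have hrec := hSrec n hn
      have hpow : Q ^ (n + 1 - 1) = Q ^ (n - 1) * Q := by
        rw [← pow_succ]; congr 1; omega
      have hS' : S (n + 1) = S n + v₁ * (c - P * S n + Q * (S n) ^ 2) := by
        rw [hrec]; linear_combination (S n) * hbez
      refine ⟨k * (u₁ + 2 * S n * v₁ + v₁ ^ 2 * (c - P * S n + Q * (S n) ^ 2)), ?_⟩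
      rw [hS', hpow]
      linear_combination (Q * (u₁ + 2 * S n * v₁ + v₁ ^ 2 * (c - P * S n + Q * (S n) ^ 2))) * hk
        - (c - P * S n + Q * (S n) ^ 2) * hbez
  intro n hn
  obtain ⟨k, hk⟩ := key n hn
  refine ⟨k, ?_⟩
  have hpow : Q ^ n = Q ^ (n - 1) * Q := by
    rw [← pow_succ]; congr 1; omega
  rw [hpow]
  linear_combination hdisc + (4 * Q) * hk
end

section
/- One has S₂ = c·v₁, and consequently the square of the ideal 𝔞 = span{Q, τ} of O satisfies 𝔞² = span{Q², τ − Q·c·v₁}. -/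
/-!
Since `τ² = Pτ - Qc`, the product `(Q, τ)²` is generated by `Q²`, `Qτ` and `τ²`. The Bézout
relation `u₁Q + v₁P = 1` gives `u₁·Qτ + v₁·τ² = τ - Qcv₁`, and conversely
`Qτ = Q(τ - Qcv₁) + cv₁·Q²` and `τ² = P(τ - Qcv₁) - u₁c·Q²`.
-/

open Polynomial

theorem AdjoinRoot.root_mul_self_of_quadratic {R : Type*} [CommRing R] (a b : R) :
    root (X ^ 2 - C a * X + C b) * root (X ^ 2 - C a * X + C b) =
      of _ a * root (X ^ 2 - C a * X + C b) - of _ b := by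
  have h := eval₂_root (X ^ 2 - C a * X + C b)
  simp only [eval₂_add, eval₂_sub, eval₂_mul, eval₂_pow, eval₂_X, eval₂_C] at h
  linear_combination h

theorem Ideal.span_pair_sq_eq_of_quadratic {R : Type*} [CommRing R] {P Q c u v τ : R}
    (hτ : τ * τ = P * τ - Q * c) (hbez : u * Q + v * P = 1) :
    Ideal.span {Q, τ} ^ 2 = Ideal.span {Q ^ 2, τ - Q * c * v} := by
  rw [sq, Ideal.span_pair_mul_span_pair]
  apply le_antisymm
  · simp only [Ideal.span_le, Set.insert_subset_iff, Set.singleton_subset_iff, SetLike.mem_coe,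
      Ideal.mem_span_pair]
    refine ⟨⟨1, 0, by ring⟩, ⟨c * v, Q, by ring⟩, ⟨c * v, Q, by ring⟩,
      ⟨-(u * c), P, by linear_combination -hτ - Q * c * hbez⟩⟩
  · rw [Ideal.span_le, Set.insert_subset_iff, Set.singleton_subset_iff]
    constructor
    · exact Ideal.subset_span (by simp [sq])
    · have ht : τ - Q * c * v = u * (Q * τ) + v * (τ * τ) := by
        linear_combination -τ * hbez - v * hτ
      rw [SetLike.mem_coe, ht]
      exact add_mem (Ideal.mul_mem_left _ _ (Ideal.subset_span (by simp)))
        (Ideal.mul_mem_left _ _ (Ideal.subset_span (by simp)))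

theorem stmt_8_general (P Q c u₁ v₁ : ℤ)
    (hbez : u₁ * Q + v₁ * P = 1)
    (S : ℕ → ℤ) (hS1 : S 1 = 0)
    (hSrec : ∀ n : ℕ, 1 ≤ n → S (n + 1) = c * v₁ + Q * u₁ * S n + Q * v₁ * (S n) ^ 2) :
    S 2 = c * v₁ ∧
      (Ideal.span {(Q : AdjoinRoot (X ^ 2 - C P * X + C (Q * c) : ℤ[X])),
          AdjoinRoot.root (X ^ 2 - C P * X + C (Q * c) : ℤ[X])}) ^ 2
        = Ideal.span {((Q ^ 2 : ℤ) : AdjoinRoot (X ^ 2 - C P * X + C (Q * c) : ℤ[X])),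
            AdjoinRoot.root (X ^ 2 - C P * X + C (Q * c) : ℤ[X]) -
              ((Q * c * v₁ : ℤ) : AdjoinRoot (X ^ 2 - C P * X + C (Q * c) : ℤ[X]))} := by
  refine ⟨by simpa [hS1] using hSrec 1 le_rfl, ?_⟩
  have hτ := AdjoinRoot.root_mul_self_of_quadratic P (Q * c)
  simp only [eq_intCast, Int.cast_mul] at hτ
  push_cast
  have hb := congrArg (AdjoinRoot.of (X ^ 2 - C P * X + C (Q * c))) hbez
  simp only [map_add, map_mul, map_one, eq_intCast] at hb
  exact Ideal.span_pair_sq_eq_of_quadratic hτ hb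

theorem stmt_8 (Δ : ℤ) (hΔ : Δ < 0) (P Q c u₁ v₁ : ℤ)
    (hdisc : P ^ 2 - Δ = 4 * Q * c) (hbez : u₁ * Q + v₁ * P = 1)
    (S : ℕ → ℤ) (hS1 : S 1 = 0)
    (hSrec : ∀ n : ℕ, 1 ≤ n → S (n + 1) = c * v₁ + Q * u₁ * S n + Q * v₁ * (S n) ^ 2) :
    S 2 = c * v₁ ∧
      (Ideal.span {(Q : AdjoinRoot (X ^ 2 - C P * X + C (Q * c) : ℤ[X])),
          AdjoinRoot.root (X ^ 2 - C P * X + C (Q * c) : ℤ[X])}) ^ 2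
        = Ideal.span {((Q ^ 2 : ℤ) : AdjoinRoot (X ^ 2 - C P * X + C (Q * c) : ℤ[X])),
            AdjoinRoot.root (X ^ 2 - C P * X + C (Q * c) : ℤ[X]) -
              ((Q * c * v₁ : ℤ) : AdjoinRoot (X ^ 2 - C P * X + C (Q * c) : ℤ[X]))} :=
  stmt_8_general P Q c u₁ v₁ hbez S hS1 hSrec
end
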